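/- arXiv:2511.11862 — 4 statements merged into one kernel-verified Lean document; each statement's English description precedes it below -/
import Mathlib

section
/- Let μ ≥ 0 and Y ~ Poisson(μ). Then for every integer c ≥ 0, E[Y · 1{Y ≥ c + 1}] = μ · P(Y ≥ c). Consequently, if Y₁,…,Y_n are independent with Y_i ~ Poisson(μ_i), K_i ∈ ℝ are costs, and d_i ≥ 0 are integer thresholds, then E[(1/n) Σ_{i=1}^n ( Y_i · 1{Y_i ≥ d_i + 1} − K_i · 1{Y_i ≥ d_i} )] = (1/n) Σ_{i=1}^n (μ_i − K_i) · P(Y_i ≥ d_i); that is, the Poisson ASSURE estimator is an unbiased estimator of the compound welfare (1/n) Σ_i (μ_i − K_i) P(Y_i ≥ d_i). -/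
open MeasureTheory

/-- Poisson probability mass function with mean `μ`. -/
noncomputable def poisP (μ : ℝ) (k : ℕ) : ℝ := Real.exp (-μ) * μ ^ k / (Nat.factorial k)

/-!
Shifting the summation index by one and using `(k + 1) · p(k + 1) = μ · p(k)` for the Poisson
mass function `p` gives Stein's identity `E[Y g(Y)] = μ E[g(Y + 1)]`; with `g = 1{· ≥ c + 1}`
this is the first claim. For the second, the joint mass function of independent Poisson variables
is a product, and summing a function of the `i`-th coordinate against a product of mass functions
(a Fubini argument for absolutely summable series) reduces to its expectation under the `i`-th
marginal; linearity of the sum then gives unbiasedness.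
-/

open Finset

lemma hasSum_poisP (μ : ℝ) : HasSum (poisP μ) 1 := by
  have h := (NormedSpace.expSeries_div_hasSum_exp μ).mul_left (Real.exp (-μ))
  rw [← Real.exp_eq_exp_ℝ, ← Real.exp_add, neg_add_cancel, Real.exp_zero] at h
  exact h.congr_fun fun k => mul_div_assoc _ _ _

lemma poisP_succ_mul_succ (μ : ℝ) (k : ℕ) :
    poisP μ (k + 1) * (k + 1) = μ * poisP μ k := by
  simp only [poisP, Nat.factorial_succ, Nat.cast_mul, Nat.cast_succ, pow_succ]
  field_simp

lemma summable_poisP_mul_ite (μ : ℝ) (c : ℕ) :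
    Summable fun k => poisP μ k * if c ≤ k then 1 else 0 := by
  refine ((hasSum_poisP μ).summable.indicator {k | c ≤ k}).congr fun k => ?_
  simp only [Set.indicator_apply, Set.mem_ofPred_eq, mul_ite, mul_one, mul_zero]

/-- Stein's identity `E[Y g(Y)] = μ E[g(Y + 1)]` for `Y ~ Poisson(μ)`. -/
lemma HasSum.poisP_mul_natCast_mul {μ s : ℝ} {g : ℕ → ℝ}
    (h : HasSum (fun k => poisP μ k * g (k + 1)) s) :
    HasSum (fun k => poisP μ k * (k * g k)) (μ * s) := by
  refine (hasSum_nat_add_iff' 1).mp ?_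
  simpa only [range_one, sum_singleton, CharP.cast_eq_zero, zero_mul, mul_zero, sub_zero,
    Nat.cast_succ, ← mul_assoc, poisP_succ_mul_succ] using h.mul_left μ

lemma hasSum_poisP_mul_natCast_mul_ite (μ : ℝ) (c : ℕ) :
    HasSum (fun k => poisP μ k * (k * if c + 1 ≤ k then 1 else 0))
      (μ * ∑' k, poisP μ k * if c ≤ k then 1 else 0) :=
  HasSum.poisP_mul_natCast_mul <| by
    simpa only [Nat.add_le_add_iff_right] using (summable_poisP_mul_ite μ c).hasSum

lemma hasSum_fin_pi_prod {β : Type*} {n : ℕ} {q : Fin n → β → ℝ} {t : Fin n → ℝ}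
    (ht : ∀ j, HasSum (q j) (t j)) :
    HasSum (fun y : Fin n → β => ∏ j, q j (y j)) (∏ j, t j) := by
  induction n with
  | zero => simp
  | succ n ih =>
    -- Over `ℝ` summable families are absolutely summable, so the double series converges.
    have hhead_norm : Summable fun b => ‖q 0 b‖ := (ht 0).summable.norm
    have htail_norm : Summable fun y : Fin n → β => ‖∏ j : Fin n, q j.succ (y j)‖ := by
      simpa only [norm_prod] using (ih fun j => (ht j.succ).summable.norm.hasSum).summable
    have hprod := summable_mul_of_summable_norm hhead_norm htail_norm
    have hmul := (ht 0).mul (ih fun j => ht j.succ) hprod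
    rw [Fin.prod_univ_succ]
    refine (Fin.consEquiv fun _ => β).hasSum_iff.mp (hmul.congr_fun fun x => ?_)
    simp only [Function.comp_apply, Fin.consEquiv_apply, Fin.prod_univ_succ, Fin.cons_zero,
      Fin.cons_succ]

lemma hasSum_fin_pi_prod_mul_apply {β : Type*} {n : ℕ} {p : Fin n → β → ℝ}
    (hp : ∀ j, HasSum (p j) 1) (i : Fin n) {h : β → ℝ} {s : ℝ}
    (hs : HasSum (fun b => p i b * h b) s) :
    HasSum (fun y : Fin n → β => (∏ j, p j (y j)) * h (y i)) s := by
  have key := hasSum_fin_pi_prod (β := β) (q := fun j b => p j b * if j = i then h b else 1)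
    (t := fun j => if j = i then s else 1) fun j => by
      by_cases hji : j = i
      · subst hji; simpa using hs
      · simpa [hji] using hp j
  simpa only [prod_mul_distrib, Fintype.prod_ite_eq'] using key

/-- the Poisson identity `E[Y·1{Y ≥ c+1}] = μ·P(Y ≥ c)` and unbiasedness
of the Poisson ASSURE estimator for the compound welfare. -/
theorem poisson_assure_unbiased :
    (∀ μ : ℝ, 0 ≤ μ → ∀ c : ℕ,
        (∑' k : ℕ, poisP μ k * ((k : ℝ) * (if c + 1 ≤ k then 1 else 0)))
          = μ * ∑' k : ℕ, poisP μ k * (if c ≤ k then 1 else 0)) ∧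
    (∀ n : ℕ, 1 ≤ n → ∀ μ : Fin n → ℝ, (∀ i, 0 ≤ μ i) →
      ∀ K : Fin n → ℝ, ∀ d : Fin n → ℕ,
        (∑' y : Fin n → ℕ, (∏ j, poisP (μ j) (y j)) *
            ((1 / (n:ℝ)) * ∑ i, ((y i : ℝ) * (if d i + 1 ≤ y i then 1 else 0)
              - K i * (if d i ≤ y i then 1 else 0))))
          = (1 / (n:ℝ)) * ∑ i, (μ i - K i) *
              (∑' k : ℕ, poisP (μ i) k * (if d i ≤ k then 1 else 0))) := by
  refine ⟨fun μ _ c => (hasSum_poisP_mul_natCast_mul_ite μ c).tsum_eq, fun n _ μ _ K d => ?_⟩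
  have hpoisP : ∀ j, HasSum (poisP (μ j)) 1 := fun j => hasSum_poisP (μ j)
  have hterm : ∀ i, HasSum (fun y : Fin n → ℕ => (∏ j, poisP (μ j) (y j)) *
      ((y i : ℝ) * (if d i + 1 ≤ y i then 1 else 0) - K i * (if d i ≤ y i then 1 else 0)))
      ((μ i - K i) * ∑' k, poisP (μ i) k * if d i ≤ k then 1 else 0) := fun i => by
    have hcount := hasSum_fin_pi_prod_mul_apply hpoisP i
      (hasSum_poisP_mul_natCast_mul_ite (μ i) (d i))
    have hcost := hasSum_fin_pi_prod_mul_apply hpoisP i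
      (summable_poisP_mul_ite (μ i) (d i)).hasSum
    rw [sub_mul]
    exact (hcount.sub (hcost.mul_left (K i))).congr_fun fun y => by ring
  refine (((hasSum_sum fun i _ => hterm i).mul_left (1 / (n : ℝ))).congr_fun fun y => ?_).tsum_eq
  simp only [mul_sum]
  exact sum_congr rfl fun i _ => by ring
end

section
/- Let φ(w) = (2π)^{−1/2} e^{−w²/2}, regarded also as an entire function on ℂ. Let f : ℝ → ℝ be measurable with ∫_ℝ |f(y)| φ(y − x) dy < ∞ for every x ∈ ℝ, and suppose the function m : ℂ → ℂ defined by m(z) = ∫_ℝ f(y) φ(y − z) dy is well defined and entire. Then there exists μ ∈ ℝ such that ∫_ℝ f(y) φ(y − μ) dy ≠ φ(μ); that is, no such f is an unbiased estimator of the Gaussian density value φ(μ) under Y ~ N(μ, 1) simultaneously for all μ ∈ ℝ. -/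
/-!
If `f` were unbiased, the entire function `m` would agree with the entire function `φ` on `ℝ`,
hence everywhere. On the imaginary axis, `φ(y - it) = φ(y) e^{iyt} e^{t²/2}`, so `m(it) = φ(it)`
says that the Fourier transform of `f φ` is the nonzero constant `φ(0)`, contradicting the
Riemann–Lebesgue lemma.
-/

open MeasureTheory

/-- standard normal density -/
noncomputable def phiR (x : ℝ) : ℝ := (Real.sqrt (2 * Real.pi))⁻¹ * Real.exp (-(x ^ 2) / 2)

/-- standard normal density, extended to the complex plane -/
noncomputable def cphiR (z : ℂ) : ℂ :=
  (Real.sqrt (2 * Real.pi) : ℂ)⁻¹ * Complex.exp (-(z ^ 2) / 2)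

open Filter Topology Complex

theorem cphiR_ofReal (w : ℝ) : cphiR w = phiR w := by
  simp only [cphiR, phiR]
  push_cast
  ring_nf

theorem differentiable_cphiR : Differentiable ℂ cphiR :=
  (differentiable_exp.comp (by fun_prop)).const_mul _

theorem cphiR_sub_mul_I (y t : ℝ) :
    cphiR (y - t * I) = cphiR y * exp (y * t * I) * exp (t ^ 2 / 2) := by
  have harg : -((y : ℂ) - t * I) ^ 2 / 2 = -(y : ℂ) ^ 2 / 2 + (y * t * I + t ^ 2 / 2) := by
    linear_combination (-(t : ℂ) ^ 2 / 2) * I_sq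
  simp only [cphiR, harg, exp_add]
  ring

theorem cphiR_mul_I (t : ℝ) : cphiR (t * I) = cphiR 0 * exp (t ^ 2 / 2) := by
  simpa using cphiR_sub_mul_I 0 (-t)

theorem cphiR_zero_ne_zero : cphiR 0 ≠ 0 := by
  simp [cphiR, Real.pi_pos.le, Real.pi_ne_zero]

theorem Differentiable.eq_of_eq_ofReal {E : Type*} [NormedAddCommGroup E] [NormedSpace ℂ E]
    [CompleteSpace E] {f g : ℂ → E} (hf : Differentiable ℂ f) (hg : Differentiable ℂ g)
    (hfg : ∀ x : ℝ, f x = g x) : f = g := by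
  have hfreq : ∃ᶠ z in 𝓝[≠] (0 : ℂ), f z = g z :=
    (continuous_ofReal.continuousWithinAt.tendsto_nhdsWithin fun _ _ ↦ by simp_all).frequently
      (Frequently.of_forall (f := 𝓝[≠] (0 : ℝ)) hfg)
  funext z
  exact (hf.differentiableOn.analyticOnNhd isOpen_univ).eqOn_of_preconnected_of_frequently_eq
    (hg.differentiableOn.analyticOnNhd isOpen_univ) isPreconnected_univ (Set.mem_univ 0) hfreq
    (Set.mem_univ z)

/-- No integrability is needed: for non-integrable `g` every integral here is the junk value `0`. -/
theorem eq_zero_of_integral_exp_mul_I_smul_eq {E : Type*} [NormedAddCommGroup E]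
    [NormedSpace ℂ E] {g : ℝ → E} {c : E}
    (h : ∀ t : ℝ, ∫ y : ℝ, exp (y * t * I) • g y = c) : c = 0 := by
  have hscale : Tendsto (fun t : ℝ => -(2 * Real.pi)⁻¹ * t) (cocompact ℝ) (cocompact ℝ) :=
    tendsto_cocompact_mul_left₀ (by simp [Real.pi_ne_zero])
  have hRL := (Real.tendsto_integral_exp_smul_cocompact g).comp hscale
  refine tendsto_nhds_unique (tendsto_const_nhds.congr fun t ↦ ?_) hRL
  rw [Function.comp_apply, ← h t]
  refine integral_congr_ae (.of_forall fun y ↦ ?_)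
  simp only [Circle.smul_def, Real.fourierChar_apply]
  congr 2
  push_cast
  field_simp

theorem no_unbiased_estimator_of_density_general (f : ℝ → ℝ)
    (m : ℂ → ℂ)
    (hm : ∀ z : ℂ, m z = ∫ y : ℝ, (f y : ℂ) * cphiR ((y : ℂ) - z))
    (hent : Differentiable ℂ m) :
    ∃ μ : ℝ, (∫ y : ℝ, f y * phiR (y - μ)) ≠ phiR μ := by
  by_contra! hunbiased
  have hm_ofReal (x : ℝ) : m x = cphiR x := by
    simp_rw [hm, ← ofReal_sub, cphiR_ofReal, ← ofReal_mul, integral_complex_ofReal, hunbiased]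
  have hm_eq : m = cphiR := hent.eq_of_eq_ofReal differentiable_cphiR hm_ofReal
  refine cphiR_zero_ne_zero <| eq_zero_of_integral_exp_mul_I_smul_eq
    (g := fun y ↦ (f y * phiR y : ℂ)) fun t ↦ mul_right_cancel₀ (exp_ne_zero (t ^ 2 / 2)) ?_
  calc (∫ y : ℝ, exp (y * t * I) • (f y * phiR y : ℂ)) * exp (t ^ 2 / 2)
      = m (t * I) := by
        rw [hm, ← integral_mul_const]
        refine integral_congr_ae (.of_forall fun y ↦ ?_)
        simp only [cphiR_sub_mul_I, cphiR_ofReal, smul_eq_mul]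
        ring
    _ = cphiR 0 * exp (t ^ 2 / 2) := by rw [hm_eq, cphiR_mul_I]

/-- Stefanski: no `f` whose Gaussian smoothing is entire can be an
unbiased estimator of `φ(μ)` under `Y ~ N(μ, 1)` for all `μ`. -/
theorem no_unbiased_estimator_of_density (f : ℝ → ℝ) (hf : Measurable f)
    (hint : ∀ x : ℝ, Integrable (fun y : ℝ => |f y| * phiR (y - x)))
    (m : ℂ → ℂ)
    (hm : ∀ z : ℂ, m z = ∫ y : ℝ, (f y : ℂ) * cphiR ((y : ℂ) - z))
    (hmint : ∀ z : ℂ, Integrable (fun y : ℝ => (f y : ℂ) * cphiR ((y : ℂ) - z)))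
    (hent : Differentiable ℂ m) :
    ∃ μ : ℝ, (∫ y : ℝ, f y * phiR (y - μ)) ≠ phiR μ :=
  no_unbiased_estimator_of_density_general f m hm hent
end

section
/- Let Y ~ N(μ, σ²), and let K, δ ∈ ℝ and ε > 0. Then E[ (Y − K)·Φ((Y − δ)/(εσ)) − (σ/ε)·φ((Y − δ)/(εσ)) ] = (μ − K)·Φ( (μ − δ)/(σ√(1 + ε²)) ). That is, the coupled-bootstrap summand is an unbiased estimator of the noise-inflated welfare (μ − K)·P(Ỹ ≥ δ) where Ỹ ~ N(μ, (1 + ε²)σ²). -/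
/-!
Write `g y = Φ((y - δ) / (εσ))`. Stein's identity `E[(Y - μ) g Y] = σ² E[g' Y]`, with
`g' = φ((· - δ) / (εσ)) / (εσ)`, turns the centred part `E[(Y - μ) g Y]` into exactly
`(σ / ε) E[φ((Y - δ) / (εσ))]`, so the left side reduces to `(μ - K) E[g Y]`. Moreover
`g y = P(W ≥ -y)` for `W ~ N(-δ, ε²σ²)` independent of `Y`, so `E[g Y] = P(Y + W ≥ 0)` where
`Y + W ~ N(μ - δ, (1 + ε²)σ²)`.
-/

open MeasureTheory ProbabilityTheory

/-- standard normal CDF -/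
noncomputable def PhiR (x : ℝ) : ℝ := ∫ t in Set.Iic x, phiR t

open Real Set
open scoped NNReal

lemma phiR_eq_gaussianPDFReal : phiR = gaussianPDFReal 0 1 := by
  ext x
  simp [phiR, gaussianPDFReal]

lemma PhiR_eq_toReal_gaussianReal_Iic (x : ℝ) : PhiR x = (gaussianReal 0 1 (Iic x)).toReal := by
  rw [gaussianReal_apply_eq_integral 0 one_ne_zero, ENNReal.toReal_ofReal
    (setIntegral_nonneg measurableSet_Iic fun y _ ↦ gaussianPDFReal_nonneg 0 1 y),
    PhiR, phiR_eq_gaussianPDFReal]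

lemma abs_PhiR_le_one (x : ℝ) : |PhiR x| ≤ 1 := by
  rw [PhiR_eq_toReal_gaussianReal_Iic, abs_of_nonneg ENNReal.toReal_nonneg]
  exact measureReal_le_one

lemma abs_phiR_le_one (x : ℝ) : |phiR x| ≤ 1 := by
  have hsqrt : 1 ≤ √(2 * π) := Real.one_le_sqrt.mpr (by nlinarith [Real.pi_gt_three])
  have hexp : exp (-(x ^ 2) / 2) ≤ 1 := Real.exp_le_one_iff.mpr (by nlinarith [sq_nonneg x])
  rw [abs_of_nonneg (by unfold phiR; positivity)]
  calc phiR x ≤ (√(2 * π))⁻¹ * 1 := by unfold phiR; gcongr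
    _ ≤ 1 := by rw [mul_one]; exact inv_le_one_of_one_le₀ hsqrt

@[fun_prop]
lemma continuous_phiR : Continuous phiR := by
  unfold phiR; fun_prop

lemma hasDerivAt_PhiR (x : ℝ) : HasDerivAt PhiR (phiR x) x := by
  have hint : Integrable phiR := phiR_eq_gaussianPDFReal ▸ integrable_gaussianPDFReal 0 1
  have hPhi : PhiR = fun y ↦ PhiR 0 + ∫ t in (0 : ℝ)..y, phiR t := by
    ext y
    rw [PhiR, PhiR, ← intervalIntegral.integral_Iic_sub_Iic hint.integrableOn hint.integrableOn]
    ring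
  rw [hPhi]
  exact (intervalIntegral.integral_hasDerivAt_right hint.intervalIntegrable
    (continuous_phiR.stronglyMeasurableAtFilter _ _) continuous_phiR.continuousAt).const_add _

@[fun_prop]
lemma continuous_PhiR : Continuous PhiR :=
  continuous_iff_continuousAt.mpr fun x ↦ (hasDerivAt_PhiR x).continuousAt

lemma toReal_gaussianReal_Ici (m : ℝ) {v : ℝ≥0} (hv : v ≠ 0) (x : ℝ) :
    (gaussianReal m v (Ici x)).toReal = PhiR ((m - x) / √v) := by
  have hsqrt : 0 < √(v : ℝ) := Real.sqrt_pos.mpr (by positivity)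
  have hstd : (gaussianReal m v).map (fun y ↦ (m - y) / √v) = gaussianReal 0 1 := by
    rw [show (fun y ↦ (m - y) / √v) = (· / √v) ∘ (m - ·) from rfl,
      ← Measure.map_map (by fun_prop) (by fun_prop), gaussianReal_map_const_sub,
      gaussianReal_map_div_const, sub_self, zero_div]
    congr 1
    ext
    simp [Real.sq_sqrt (NNReal.coe_nonneg v), hv]
  have hpre : (fun y ↦ (m - y) / √v) ⁻¹' Iic ((m - x) / √v) = Ici x := by
    ext y
    simp only [mem_preimage, mem_Iic, mem_Ici, div_le_div_iff_of_pos_right hsqrt]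
    constructor <;> intro h <;> linarith
  rw [PhiR_eq_toReal_gaussianReal_Iic, ← hstd, Measure.map_apply (by fun_prop) measurableSet_Iic,
    hpre]

lemma hasDerivAt_gaussianPDFReal (μ : ℝ) (v : ℝ≥0) (x : ℝ) :
    HasDerivAt (gaussianPDFReal μ v) (-((x - μ) / v) * gaussianPDFReal μ v x) x := by
  have hsq : HasDerivAt (fun y ↦ (y - μ) ^ 2) (2 * (x - μ)) x := by
    simpa using ((hasDerivAt_id x).sub_const μ).fun_pow 2
  have hexp : HasDerivAt (fun y ↦ -(y - μ) ^ 2 / (2 * v)) (-((x - μ) / v)) x := by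
    refine hsq.neg.div_const (2 * (v : ℝ)) |>.congr_deriv ?_
    by_cases hv : (v : ℝ) = 0
    · simp [hv]
    · field_simp
  simp only [gaussianPDFReal_def]
  exact (hexp.exp.const_mul _).congr_deriv (by ring)

lemma integrable_gaussianReal_iff {μ : ℝ} {v : ℝ≥0} (hv : v ≠ 0) {f : ℝ → ℝ} :
    Integrable f (gaussianReal μ v) ↔ Integrable (fun x ↦ gaussianPDFReal μ v x * f x) := by
  rw [gaussianReal_of_var_ne_zero μ hv, integrable_withDensity_iff_integrable_smul'
    (measurable_gaussianPDF μ v) (ae_of_all _ fun _ ↦ gaussianPDF_lt_top)]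
  simp

theorem integral_sub_mul_gaussianReal {μ : ℝ} {v : ℝ≥0} (hv : v ≠ 0) {g g' : ℝ → ℝ}
    (hg : ∀ x, HasDerivAt g (g' x) x) (hg_int : Integrable g (gaussianReal μ v))
    (hg'_int : Integrable g' (gaussianReal μ v))
    (hxg_int : Integrable (fun x ↦ (x - μ) * g x) (gaussianReal μ v)) :
    ∫ x, (x - μ) * g x ∂gaussianReal μ v = v * ∫ x, g' x ∂gaussianReal μ v := by
  have hv' : (v : ℝ) ≠ 0 := by exact_mod_cast hv
  have hp (x : ℝ) :
      HasDerivAt (fun y ↦ -v * gaussianPDFReal μ v y) ((x - μ) * gaussianPDFReal μ v x) x :=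
    ((hasDerivAt_gaussianPDFReal μ v x).const_mul (-(v : ℝ))).congr_deriv (by field_simp)
  rw [integrable_gaussianReal_iff hv] at hg_int hg'_int hxg_int
  have parts := integral_mul_deriv_eq_deriv_mul_of_integrable (fun x _ ↦ hg x) (fun x _ ↦ hp x)
    (hxg_int.congr (ae_of_all _ fun x ↦ by simp only [Pi.mul_apply]; ring))
    ((hg'_int.const_mul (-v)).congr (ae_of_all _ fun x ↦ by simp only [Pi.mul_apply]; ring))
    ((hg_int.const_mul (-v)).congr (ae_of_all _ fun x ↦ by simp only [Pi.mul_apply]; ring))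
  simp only [integral_gaussianReal_eq_integral_smul hv, smul_eq_mul]
  rw [← integral_const_mul]
  convert parts using 1
  · congr 1; ext x; ring
  · rw [← integral_neg]; congr 1; ext x; ring

lemma MeasureTheory.Measure.conv_apply_Ici_zero (ρ ν : Measure ℝ) [SFinite ν] :
    (ρ ∗ ν) (Ici 0) = ∫⁻ y, ν (Ici (-y)) ∂ρ := by
  rw [Measure.conv, Measure.map_apply measurable_add measurableSet_Ici,
    Measure.prod_apply (measurable_add measurableSet_Ici)]
  congr 1 with y
  congr 1 with x
  simp [neg_le_iff_add_nonneg']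

lemma integral_PhiR_gaussianReal (μ δ : ℝ) (v : ℝ≥0) {s : ℝ} (hs : 0 < s) :
    ∫ y, PhiR ((y - δ) / s) ∂gaussianReal μ v = PhiR ((μ - δ) / √(v + s ^ 2)) := by
  set ν := gaussianReal (-δ) (s ^ 2).toNNReal
  have hs2 : ((s ^ 2).toNNReal : ℝ) = s ^ 2 := Real.coe_toNNReal _ (sq_nonneg s)
  have hν : (s ^ 2).toNNReal ≠ 0 := by simp [hs.ne']
  have hPhi : ∀ y, PhiR ((y - δ) / s) = (ν (Ici (-y))).toReal := fun y ↦ by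
    rw [toReal_gaussianReal_Ici _ hν, hs2, Real.sqrt_sq hs.le]
    ring_nf
  have hmono : Monotone fun y ↦ ν (Ici (-y)) :=
    fun y y' hyy' ↦ measure_mono (Ici_subset_Ici.mpr (neg_le_neg hyy'))
  simp_rw [hPhi]
  rw [integral_toReal hmono.measurable.aemeasurable (ae_of_all _ fun _ ↦ measure_lt_top _ _),
    ← Measure.conv_apply_Ici_zero, gaussianReal_conv_gaussianReal,
    toReal_gaussianReal_Ici _ (by simp [hν])]
  push_cast
  rw [hs2]
  ring_nf

lemma integrable_PhiR_comp (ν : Measure ℝ) [IsFiniteMeasure ν] (δ s : ℝ) :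
    Integrable (fun y ↦ PhiR ((y - δ) / s)) ν :=
  .of_bound (by fun_prop) 1 (ae_of_all _ fun _ ↦ abs_PhiR_le_one _)

lemma integrable_phiR_comp (ν : Measure ℝ) [IsFiniteMeasure ν] (δ s : ℝ) :
    Integrable (fun y ↦ phiR ((y - δ) / s)) ν :=
  .of_bound (by fun_prop) 1 (ae_of_all _ fun _ ↦ abs_phiR_le_one _)

lemma integrable_sub_mul_PhiR_comp_gaussianReal (μ : ℝ) (v : ℝ≥0) (c δ s : ℝ) :
    Integrable (fun y ↦ (y - c) * PhiR ((y - δ) / s)) (gaussianReal μ v) :=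
  (((memLp_id_gaussianReal 1).integrable le_rfl).sub (integrable_const c)).mul_bdd
    (by fun_prop) (ae_of_all _ fun _ ↦ abs_PhiR_le_one _)

lemma integral_sub_mul_PhiR_gaussianReal (μ : ℝ) {v : ℝ≥0} (hv : v ≠ 0) (δ s : ℝ) :
    ∫ y, (y - μ) * PhiR ((y - δ) / s) ∂gaussianReal μ v
      = v / s * ∫ y, phiR ((y - δ) / s) ∂gaussianReal μ v := by
  have hg (y : ℝ) :
      HasDerivAt (fun y ↦ PhiR ((y - δ) / s)) (phiR ((y - δ) / s) * (1 / s)) y :=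
    (hasDerivAt_PhiR _).comp y (((hasDerivAt_id y).sub_const δ).div_const s)
  rw [integral_sub_mul_gaussianReal hv hg (integrable_PhiR_comp _ δ s)
    ((integrable_phiR_comp _ δ s).mul_const _) (integrable_sub_mul_PhiR_comp_gaussianReal ..),
    integral_mul_const]
  ring

/-- the coupled-bootstrap summand is an unbiased estimator of the
noise-inflated welfare. -/
theorem coupled_bootstrap_unbiased (μ σ K δ ε : ℝ) (hσ : 0 < σ) (hε : 0 < ε) :
    (∫ y, ((y - K) * PhiR ((y - δ) / (ε * σ)) - (σ / ε) * phiR ((y - δ) / (ε * σ)))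
        ∂(gaussianReal μ ((σ ^ 2).toNNReal)))
      = (μ - K) * PhiR ((μ - δ) / (σ * Real.sqrt (1 + ε ^ 2))) := by
  set γ := gaussianReal μ (σ ^ 2).toNNReal
  have hv : (σ ^ 2).toNNReal ≠ 0 := by simp [hσ.ne']
  have hvσ : ((σ ^ 2).toNNReal : ℝ) = σ ^ 2 := Real.coe_toNNReal _ (sq_nonneg σ)
  have hsqrt : √(σ ^ 2 + (ε * σ) ^ 2) = σ * √(1 + ε ^ 2) := by
    rw [show σ ^ 2 + (ε * σ) ^ 2 = σ ^ 2 * (1 + ε ^ 2) by ring, Real.sqrt_mul (sq_nonneg σ),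
      Real.sqrt_sq hσ.le]
  have stein := integral_sub_mul_PhiR_gaussianReal μ hv δ (ε * σ)
  have smooth := integral_PhiR_gaussianReal μ δ (σ ^ 2).toNNReal (by positivity : 0 < ε * σ)
  rw [hvσ] at stein smooth
  rw [hsqrt] at smooth
  have hK : ∫ y, (y - K) * PhiR ((y - δ) / (ε * σ)) ∂γ
      = ∫ y, (y - μ) * PhiR ((y - δ) / (ε * σ)) ∂γ
        + (μ - K) * PhiR ((μ - δ) / (σ * √(1 + ε ^ 2))) := by
    rw [← smooth, ← integral_const_mul, ← integral_add
      (integrable_sub_mul_PhiR_comp_gaussianReal ..) ((integrable_PhiR_comp _ _ _).const_mul _)]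
    congr 1 with y
    ring
  rw [integral_sub (integrable_sub_mul_PhiR_comp_gaussianReal ..)
    ((integrable_phiR_comp _ _ _).const_mul _), integral_const_mul, hK, stein]
  field_simp
  ring
end

section
/- Let Y ~ N(μ, σ²) and W ~ N(0, σ²) be independent, and let ε > 0. Then the random variables Y₁ = Y + εW and Y₂ = Y − W/ε are independent, with Y₁ ~ N(μ, (1 + ε²)σ²) and Y₂ ~ N(μ, (1 + ε^{−2})σ²). -/
/-!
The pair `(Y, W)` is a Gaussian vector, hence so is its linear image `(Y + εW, Y - W/ε)`. The
two coordinates are uncorrelated, their covariance being `Var Y - Var W = 0`, and uncorrelated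
jointly Gaussian variables are independent. Each coordinate is a sum of independent Gaussians,
whose means and variances add.
-/

open MeasureTheory ProbabilityTheory
open scoped NNReal

namespace ProbabilityTheory

variable {Ω : Type*} [MeasurableSpace Ω] {P : Measure Ω} {X Y : Ω → ℝ}

lemma IndepFun.covariance_add_const_mul [IsFiniteMeasure P] (hXY : IndepFun X Y P)
    (hX : MemLp X 2 P) (hY : MemLp Y 2 P) (a b : ℝ) :
    cov[fun ω ↦ X ω + a * Y ω, fun ω ↦ X ω + b * Y ω; P]
      = Var[X; P] + a * b * Var[Y; P] := by
  have hcross : cov[X, Y; P] = 0 := hXY.covariance_eq_zero hX hY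
  have haY : MemLp (fun ω ↦ a * Y ω) 2 P := hY.const_mul a
  have hbY : MemLp (fun ω ↦ b * Y ω) 2 P := hY.const_mul b
  change cov[X + fun ω ↦ a * Y ω, X + fun ω ↦ b * Y ω; P] = _
  rw [covariance_add_left hX haY (hX.add hbY), covariance_add_right hX hX hbY,
    covariance_add_right haY hX hbY, covariance_const_mul_left, covariance_const_mul_left,
    covariance_const_mul_right, covariance_const_mul_right, covariance_comm Y X, hcross,
    covariance_self hX.aemeasurable, covariance_self hY.aemeasurable]
  ring

lemma HasGaussianLaw.indepFun_add_const_mul (hX : HasGaussianLaw X P) (hY : HasGaussianLaw Y P)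
    (hXY : IndepFun X Y P) {a b : ℝ} (h : Var[X; P] + a * b * Var[Y; P] = 0) :
    IndepFun (fun ω ↦ X ω + a * Y ω) (fun ω ↦ X ω + b * Y ω) P := by
  have := hX.isProbabilityMeasure
  have hjoint : HasGaussianLaw (fun ω ↦ (X ω, Y ω)) P := hXY.hasGaussianLaw hX hY
  let L : ℝ × ℝ →L[ℝ] ℝ × ℝ :=
    (ContinuousLinearMap.fst ℝ ℝ ℝ + a • ContinuousLinearMap.snd ℝ ℝ ℝ).prod
      (ContinuousLinearMap.fst ℝ ℝ ℝ + b • ContinuousLinearMap.snd ℝ ℝ ℝ)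
  exact (hjoint.map_fun L).indepFun_of_covariance_eq_zero <|
    (hXY.covariance_add_const_mul hX.memLp_two hY.memLp_two a b).trans h

lemma gaussianReal_add_const_mul_of_indepFun {m₁ m₂ : ℝ} {v₁ v₂ : ℝ≥0}
    (hX : HasLaw X (gaussianReal m₁ v₁) P) (hY : HasLaw Y (gaussianReal m₂ v₂) P)
    (hXY : IndepFun X Y P) (c : ℝ) :
    HasLaw (fun ω ↦ X ω + c * Y ω)
      (gaussianReal (m₁ + c * m₂) (v₁ + .mk (c ^ 2) (sq_nonneg c) * v₂)) P where
  aemeasurable := by fun_prop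
  map_eq := gaussianReal_add_gaussianReal_of_indepFun
    (hXY.comp measurable_id (measurable_const_mul c)) hX.map_eq (gaussianReal_const_mul hY c).map_eq

end ProbabilityTheory

theorem coupled_bootstrap_independence_general {Ω : Type*} [MeasurableSpace Ω]
    (P : Measure Ω) [IsProbabilityMeasure P]
    (μ σ ε : ℝ) (hε : 0 < ε)
    (Y W : Ω → ℝ) (hY : Measurable Y) (hW : Measurable W)
    (hYlaw : Measure.map Y P = gaussianReal μ ((σ ^ 2).toNNReal))
    (hWlaw : Measure.map W P = gaussianReal 0 ((σ ^ 2).toNNReal))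
    (hindep : IndepFun Y W P) :
    IndepFun (fun ω => Y ω + ε * W ω) (fun ω => Y ω - W ω / ε) P ∧
    Measure.map (fun ω => Y ω + ε * W ω) P
      = gaussianReal μ (((1 + ε ^ 2) * σ ^ 2).toNNReal) ∧
    Measure.map (fun ω => Y ω - W ω / ε) P
      = gaussianReal μ (((1 + (ε⁻¹) ^ 2) * σ ^ 2).toNNReal) := by
  have hYl : HasLaw Y (gaussianReal μ (σ ^ 2).toNNReal) P := ⟨hY.aemeasurable, hYlaw⟩
  have hWl : HasLaw W (gaussianReal 0 (σ ^ 2).toNNReal) P := ⟨hW.aemeasurable, hWlaw⟩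
  have huncorr : Var[Y; P] + ε * -ε⁻¹ * Var[W; P] = 0 := by
    rw [hYl.variance_eq, hWl.variance_eq, variance_id_gaussianReal, variance_id_gaussianReal]
    field_simp
    ring
  have hsub : (fun ω ↦ Y ω - W ω / ε) = fun ω ↦ Y ω + -ε⁻¹ * W ω := by
    funext ω
    ring
  have hvar_add (c : ℝ) :
      (σ ^ 2).toNNReal + .mk (c ^ 2) (sq_nonneg c) * (σ ^ 2).toNNReal
        = ((1 + c ^ 2) * σ ^ 2).toNNReal := by
    ext
    simp only [NNReal.coe_add, NNReal.coe_mul, NNReal.coe_mk, Real.coe_toNNReal _ (sq_nonneg σ),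
      Real.coe_toNNReal _ (by positivity : 0 ≤ (1 + c ^ 2) * σ ^ 2)]
    ring
  rw [hsub]
  refine ⟨hYl.hasGaussianLaw.indepFun_add_const_mul hWl.hasGaussianLaw hindep huncorr, ?_, ?_⟩
  · have := (gaussianReal_add_const_mul_of_indepFun hYl hWl hindep ε).map_eq
    rwa [hvar_add, mul_zero, add_zero] at this
  · have := (gaussianReal_add_const_mul_of_indepFun hYl hWl hindep (-ε⁻¹)).map_eq
    rwa [hvar_add, neg_sq, mul_zero, add_zero] at this

/-- the coupled-bootstrap construction: `Y + εW` and `Y − W/ε` are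
independent Gaussians with the stated laws. -/
theorem coupled_bootstrap_independence {Ω : Type*} [MeasurableSpace Ω]
    (P : Measure Ω) [IsProbabilityMeasure P]
    (μ σ ε : ℝ) (hσ : 0 < σ) (hε : 0 < ε)
    (Y W : Ω → ℝ) (hY : Measurable Y) (hW : Measurable W)
    (hYlaw : Measure.map Y P = gaussianReal μ ((σ ^ 2).toNNReal))
    (hWlaw : Measure.map W P = gaussianReal 0 ((σ ^ 2).toNNReal))
    (hindep : IndepFun Y W P) :
    IndepFun (fun ω => Y ω + ε * W ω) (fun ω => Y ω - W ω / ε) P ∧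
    Measure.map (fun ω => Y ω + ε * W ω) P
      = gaussianReal μ (((1 + ε ^ 2) * σ ^ 2).toNNReal) ∧
    Measure.map (fun ω => Y ω - W ω / ε) P
      = gaussianReal μ (((1 + (ε⁻¹) ^ 2) * σ ^ 2).toNNReal) :=
  coupled_bootstrap_independence_general P μ σ ε hε Y W hY hW hYlaw hWlaw hindep
end
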